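/- arXiv:1007.1931 — 5 statements merged into one kernel-verified Lean document; each statement's English description precedes it below -/
import Mathlib

section
/- Let G be a finite group and let X and Y be finite G-sets. Then the dimension over ℂ of the space of intertwining operators Hom_{Rep ℂ G}(ℂ[X], ℂ[Y]) between the permutation representations ℂ[X] and ℂ[Y] equals the number of G-orbits of the diagonal action of G on X × Y. -/
/-!
A linear map `k[X] → k[Y]` is the same as its kernel (matrix) `K (x, y)`, the coefficient of `y`
in the image of `x`, and it intertwines the permutation actions exactly when
`K (g • x, g • y) = K (x, y)`. So intertwiners are the `G`-invariant functions on `X × Y`, that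
is, the functions on its orbit set, a space whose dimension is the number of orbits.
-/

open CategoryTheory

namespace MulAction

variable {k G Z : Type*} [Semiring k] [Group G] [MulAction G Z]

theorem mem_range_funLeft_orbitRel_mk_iff {φ : Z → k} :
    φ ∈ LinearMap.range (LinearMap.funLeft k k (Quotient.mk (orbitRel G Z))) ↔
      ∀ (g : G) (z : Z), φ (g • z) = φ z := by
  constructor
  · rintro ⟨ψ, rfl⟩ g z
    exact congrArg ψ (Quotient.sound (mem_orbit z g))
  · intro hφ
    refine ⟨Quotient.lift φ fun a b hab => ?_, rfl⟩
    obtain ⟨g, rfl⟩ := orbitRel_apply.mp hab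
    exact hφ g b

end MulAction

namespace MonoidAlgebra

variable (k X Y : Type*) [CommSemiring k] [Fintype X] [Finite Y]

noncomputable def linearMapEquivKernel : (k[X] →ₗ[k] k[Y]) ≃ₗ[k] (X × Y → k) :=
  by classical exact LinearMap.toMatrix (basis X k) (basis Y k) ≪≫ₗ
    Matrix.transposeLinearEquiv Y X k k ≪≫ₗ (LinearEquiv.curry k k X Y).symm

variable {k X Y}

@[simp]
theorem linearMapEquivKernel_apply (f : k[X] →ₗ[k] k[Y]) (x : X) (y : Y) :
    linearMapEquivKernel k X Y f (x, y) = (f (single x 1)).coeff y := by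
  classical
  change LinearMap.toMatrix (basis X k) (basis Y k) f y x = _
  rw [LinearMap.toMatrix_apply, basis_apply]
  rfl

end MonoidAlgebra

namespace Representation

open MonoidAlgebra

variable {k G X Y : Type*} [CommRing k] [Group G] [MulAction G X] [MulAction G Y]
  [Fintype X] [Finite Y]

theorem linearMapEquivKernel_linHom_ofMulAction (g : G) (f : k[X] →ₗ[k] k[Y]) (p : X × Y) :
    linearMapEquivKernel k X Y (linHom (ofMulAction k G X) (ofMulAction k G Y) g f) p =
      linearMapEquivKernel k X Y f (g⁻¹ • p) := by
  obtain ⟨x, y⟩ := p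
  simp [ofMulAction_single, coeff_ofMulAction]

theorem mem_invariants_linHom_ofMulAction_iff (f : k[X] →ₗ[k] k[Y]) :
    f ∈ (linHom (ofMulAction k G X) (ofMulAction k G Y)).invariants ↔
      ∀ (g : G) (p : X × Y),
        linearMapEquivKernel k X Y f (g • p) = linearMapEquivKernel k X Y f p := by
  simp only [mem_invariants, ← (linearMapEquivKernel k X Y).injective.eq_iff, funext_iff,
    linearMapEquivKernel_linHom_ofMulAction]
  constructor
  · intro h g p
    simpa using h g⁻¹ p
  · intro h g p
    exact h g⁻¹ p

theorem map_linearMapEquivKernel_invariants_linHom_ofMulAction :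
    (linHom (ofMulAction k G X) (ofMulAction k G Y)).invariants.map
        (linearMapEquivKernel k X Y : (k[X] →ₗ[k] k[Y]) →ₗ[k] X × Y → k) =
      LinearMap.range (LinearMap.funLeft k k (Quotient.mk (MulAction.orbitRel G (X × Y)))) := by
  ext φ
  rw [Submodule.mem_map_equiv, mem_invariants_linHom_ofMulAction_iff,
    LinearEquiv.apply_symm_apply, MulAction.mem_range_funLeft_orbitRel_mk_iff]

end Representation

theorem finrank_intertwiners_eq_card_orbits_general (G : Type) [Group G]
    (X Y : Type) [Fintype X] [Fintype Y] [MulAction G X] [MulAction G Y] :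
    Module.finrank ℂ (Rep.ofMulAction ℂ G X ⟶ Rep.ofMulAction ℂ G Y) =
      Nat.card (Quotient (MulAction.orbitRel G (X × Y))) := by
  have hmk : Function.Injective
      (LinearMap.funLeft ℂ ℂ (Quotient.mk (MulAction.orbitRel G (X × Y)))) :=
    LinearMap.funLeft_injective_of_surjective _ _ _ Quotient.mk_surjective
  calc Module.finrank ℂ (Rep.ofMulAction ℂ G X ⟶ Rep.ofMulAction ℂ G Y)
      = Module.finrank ℂ (Representation.linHom (Representation.ofMulAction ℂ G X)
          (Representation.ofMulAction ℂ G Y)).invariants :=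
        (Representation.linHom.invariantsEquivRepHom _ _).finrank_eq.symm
    _ = Module.finrank ℂ (Quotient (MulAction.orbitRel G (X × Y)) → ℂ) := by
        rw [← LinearEquiv.finrank_map_eq (MonoidAlgebra.linearMapEquivKernel ℂ X Y),
          Representation.map_linearMapEquivKernel_invariants_linHom_ofMulAction,
          LinearMap.finrank_range_of_inj hmk]
    _ = Nat.card (Quotient (MulAction.orbitRel G (X × Y))) := by
        have := Fintype.ofFinite (Quotient (MulAction.orbitRel G (X × Y)))
        rw [Module.finrank_pi, Nat.card_eq_fintype_card]

/-- The dimension of the space of intertwining operators between the permutation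
representations `ℂ[X]` and `ℂ[Y]` equals the number of `G`-orbits of the diagonal
action of `G` on `X × Y`. -/
theorem finrank_intertwiners_eq_card_orbits (G : Type) [Group G] [Fintype G]
    (X Y : Type) [Fintype X] [Fintype Y] [MulAction G X] [MulAction G Y] :
    Module.finrank ℂ (Rep.ofMulAction ℂ G X ⟶ Rep.ofMulAction ℂ G Y) =
      Nat.card (Quotient (MulAction.orbitRel G (X × Y))) :=
  finrank_intertwiners_eq_card_orbits_general G X Y
end

section
/- Let F be a finite field with q elements, let p be a 1-dimensional F-subspace of F³, and let ℓ₁ and ℓ₃ be 2-dimensional subspaces of F³ containing p (so that (p,ℓ₁) and (p,ℓ₃) are complete flags with the same point). Then the number of 2-dimensional subspaces ℓ₂ of F³ with p ≤ ℓ₂, ℓ₂ ≠ ℓ₁ and ℓ₂ ≠ ℓ₃ equals q if ℓ₁ = ℓ₃, and equals q−1 if ℓ₁ ≠ ℓ₃. (This is the decategorified relation L² = (q−1)·L + q·1 for the categorified Hecke algebra generator L, the span of flags sharing a point but with different lines.) -/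
/-!
Lines through the point `p` of `F³` are the points of the projective line `ℙ(F³ ⧸ p)`, so there
are `q + 1` of them; removing `ℓ₁` and `ℓ₃` leaves `q` or `q - 1` according as they coincide.
-/

open Module

section

variable {K V : Type*} [DivisionRing K] [AddCommGroup V] [Module K V] [FiniteDimensional K V]

theorem Submodule.finrank_map_mkQ_add_finrank {p ℓ : Submodule K V} (h : p ≤ ℓ) :
    finrank K (ℓ.map p.mkQ) + finrank K p = finrank K ℓ := by
  have := LinearMap.finrank_range_add_finrank_ker (p.mkQ.domRestrict ℓ)
  rwa [LinearMap.range_domRestrict, LinearMap.ker_domRestrict, Submodule.ker_mkQ,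
    (Submodule.comapSubtypeEquivOfLe h).finrank_eq] at this

def Submodule.supersetsEquivQuotient (p : Submodule K V) (k : ℕ) :
    {ℓ : Submodule K V // finrank K ℓ = finrank K p + k ∧ p ≤ ℓ} ≃
      {H : Submodule K (V ⧸ p) // finrank K H = k} where
  toFun ℓ := ⟨ℓ.1.map p.mkQ, by
    have := Submodule.finrank_map_mkQ_add_finrank ℓ.2.2
    omega⟩
  invFun H := ⟨H.1.comap p.mkQ, by
    have := Submodule.finrank_map_mkQ_add_finrank (p.le_comap_mkQ H.1)
    rw [Submodule.map_comap_eq_of_surjective p.mkQ_surjective, H.2] at this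
    exact ⟨by omega, p.le_comap_mkQ H.1⟩⟩
  left_inv ℓ := Subtype.ext <| by
    simp [Submodule.comap_map_mkQ, sup_eq_right.2 ℓ.2.2]
  right_inv H := Subtype.ext <| Submodule.map_comap_eq_of_surjective p.mkQ_surjective _

theorem Submodule.card_supersets_finrank_add_one [Finite K] {p : Submodule K V}
    (h : finrank K V = finrank K p + 2) :
    Nat.card {ℓ : Submodule K V // finrank K ℓ = finrank K p + 1 ∧ p ≤ ℓ} = Nat.card K + 1 := by
  have hquot : finrank K (V ⧸ p) = 2 := by
    have := p.finrank_quotient_add_finrank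
    omega
  rw [Nat.card_congr ((p.supersetsEquivQuotient 1).trans
      (Projectivization.equivSubmodule K _).symm), Projectivization.card_of_finrank_two K _ hquot]

end

theorem Nat.card_subtype_and_ne_and_ne {α : Type*} [DecidableEq α] {P : α → Prop}
    [Finite {x // P x}] {a b : α} (ha : P a) (hb : P b) :
    Nat.card {x // P x ∧ x ≠ a ∧ x ≠ b} =
      if a = b then Nat.card {x // P x} - 1 else Nat.card {x // P x} - 2 := by
  have hsub : ({a, b} : Set α) ⊆ {x | P x} := Set.insert_subset ha (Set.singleton_subset_iff.2 hb)
  have hdiff : {x | P x ∧ x ≠ a ∧ x ≠ b} = {x | P x} \ {a, b} := by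
    ext x
    simp [not_or]
  have hcard := Set.ncard_sdiff hsub (Set.toFinite _)
  rw [← hdiff, ← Nat.card_coe_set_eq, ← Nat.card_coe_set_eq, Set.coe_ofPred, Set.coe_ofPred]
    at hcard
  rw [hcard]
  split_ifs with hab
  · simp [hab]
  · rw [Set.ncard_pair hab]

/-- Decategorified relation `L² = (q−1)·L + q·1` for the generator `L` ("same point,
different line") of the `A₂` Hecke algebra: given a point `p` in `F³` and lines
`ℓ₁, ℓ₃` containing `p`, the number of lines `ℓ₂` containing `p` distinct from both
`ℓ₁` and `ℓ₃` is `q` if `ℓ₁ = ℓ₃` and `q − 1` otherwise. -/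
theorem hecke_L_squared_relation (F : Type) [Field F] [Fintype F]
    (q : ℕ) (hq : Fintype.card F = q)
    (p ℓ₁ ℓ₃ : Submodule F (Fin 3 → F))
    (hp : Module.finrank F p = 1)
    (hℓ₁ : Module.finrank F ℓ₁ = 2) (hℓ₃ : Module.finrank F ℓ₃ = 2)
    (h₁ : p ≤ ℓ₁) (h₃ : p ≤ ℓ₃) :
    Nat.card {ℓ₂ : Submodule F (Fin 3 → F) //
        Module.finrank F ℓ₂ = 2 ∧ p ≤ ℓ₂ ∧ ℓ₂ ≠ ℓ₁ ∧ ℓ₂ ≠ ℓ₃} =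
      if ℓ₁ = ℓ₃ then q else q - 1 := by
  have hlines : Nat.card {ℓ : Submodule F (Fin 3 → F) // finrank F ℓ = 2 ∧ p ≤ ℓ} = q + 1 := by
    have := Submodule.card_supersets_finrank_add_one (p := p) (by simp [hp])
    rwa [hp, Nat.card_eq_fintype_card (α := F), hq] at this
  have : Finite {ℓ : Submodule F (Fin 3 → F) // finrank F ℓ = 2 ∧ p ≤ ℓ} :=
    Nat.finite_of_card_ne_zero (by omega)
  rw [← Nat.card_congr (Equiv.subtypeEquivRight fun _ => and_assoc),
    Nat.card_subtype_and_ne_and_ne ⟨hℓ₁, h₁⟩ ⟨hℓ₃, h₃⟩, hlines]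
  split_ifs <;> omega
end

section
/- (Yang–Baxter isomorphism PLP ≅ LPL for flags in F³.) Let F be a finite field with q elements and let (p₁,ℓ₁) and (p',ℓ') be complete flags in F³. Then the number of 1-dimensional subspaces p₂ of F³ satisfying p₂ ≤ ℓ₁, p₂ ≤ ℓ', p₂ ≠ p₁, p₂ ≠ p', and ℓ₁ ≠ ℓ' equals the number of 2-dimensional subspaces m of F³ satisfying p₁ ≤ m, p' ≤ m, m ≠ ℓ₁, m ≠ ℓ', and p₁ ≠ p'. (The left count enumerates chains of flags realizing PLP from (p₁,ℓ₁) to (p',ℓ'): change point to p₂, then line to ℓ', then point to p'; the right count enumerates chains realizing LPL: change line to m, then point to p', then line to ℓ'. The resulting bijection comes from the projective plane axioms: two distinct points lie on a unique line and two distinct lines meet in a unique point.) -/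
section
set_option linter.unusedSectionVars false
variable {F : Type} [Field F] [Fintype F]

lemma fr3 : Module.finrank F (Fin 3 → F) = 3 := by simp

lemma inf_rank_one {ℓ₁ ℓ' : Submodule F (Fin 3 → F)}
    (hℓ₁ : Module.finrank F ℓ₁ = 2) (hℓ' : Module.finrank F ℓ' = 2)
    (hne : ℓ₁ ≠ ℓ') : Module.finrank F ↥(ℓ₁ ⊓ ℓ') = 1 := by
  have hkey := Submodule.finrank_sup_add_finrank_inf_eq ℓ₁ ℓ'
  have hlt : ℓ₁ < ℓ₁ ⊔ ℓ' := by
    refine lt_of_le_of_ne le_sup_left fun h => hne ?_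
    have : ℓ' ≤ ℓ₁ := h ▸ le_sup_right
    exact (Submodule.eq_of_le_of_finrank_le this (by omega)).symm
  have h1 : Module.finrank F ↥(ℓ₁ ⊔ ℓ') ≤ 3 := by
    have := Submodule.finrank_le (ℓ₁ ⊔ ℓ')
    rwa [fr3] at this
  have h2 : Module.finrank F ℓ₁ < Module.finrank F ↥(ℓ₁ ⊔ ℓ') :=
    Submodule.finrank_lt_finrank_of_lt hlt
  omega

lemma sup_rank_two {p₁ p' : Submodule F (Fin 3 → F)}
    (hp₁ : Module.finrank F p₁ = 1) (hp' : Module.finrank F p' = 1)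
    (hne : p₁ ≠ p') : Module.finrank F ↥(p₁ ⊔ p') = 2 := by
  have hkey := Submodule.finrank_sup_add_finrank_inf_eq p₁ p'
  have hlt : p₁ ⊓ p' < p₁ := by
    refine lt_of_le_of_ne inf_le_left fun h => hne ?_
    have : p₁ ≤ p' := h ▸ inf_le_right
    exact Submodule.eq_of_le_of_finrank_le this (by omega)
  have h2 : Module.finrank F ↥(p₁ ⊓ p') < Module.finrank F p₁ :=
    Submodule.finrank_lt_finrank_of_lt hlt
  omega

end

/-- Yang–Baxter isomorphism `PLP ≅ LPL` for flags in `F³`: given complete flags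
`(p₁,ℓ₁)` and `(p',ℓ')`, the number of intermediate points `p₂` realizing a `PLP`
chain from `(p₁,ℓ₁)` to `(p',ℓ')` equals the number of intermediate lines `m`
realizing an `LPL` chain. -/
theorem yang_baxter_flags (F : Type) [Field F] [Fintype F]
    (p₁ ℓ₁ p' ℓ' : Submodule F (Fin 3 → F))
    (hp₁ : Module.finrank F p₁ = 1) (hℓ₁ : Module.finrank F ℓ₁ = 2) (h₁ : p₁ ≤ ℓ₁)
    (hp' : Module.finrank F p' = 1) (hℓ' : Module.finrank F ℓ' = 2) (h' : p' ≤ ℓ') :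
    Nat.card {p₂ : Submodule F (Fin 3 → F) //
        Module.finrank F p₂ = 1 ∧ p₂ ≤ ℓ₁ ∧ p₂ ≤ ℓ' ∧
          p₂ ≠ p₁ ∧ p₂ ≠ p' ∧ ℓ₁ ≠ ℓ'} =
      Nat.card {m : Submodule F (Fin 3 → F) //
        Module.finrank F m = 2 ∧ p₁ ≤ m ∧ p' ≤ m ∧
          m ≠ ℓ₁ ∧ m ≠ ℓ' ∧ p₁ ≠ p'} := by
  -- characterization of elements
  have Lchar : ∀ p₂ : Submodule F (Fin 3 → F), ℓ₁ ≠ ℓ' →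
      Module.finrank F p₂ = 1 → p₂ ≤ ℓ₁ → p₂ ≤ ℓ' → p₂ = ℓ₁ ⊓ ℓ' := by
    intro p₂ hne hr ha hb
    exact Submodule.eq_of_le_of_finrank_le (le_inf ha hb)
      (by rw [inf_rank_one hℓ₁ hℓ' hne, hr])
  have Rchar : ∀ m : Submodule F (Fin 3 → F), p₁ ≠ p' →
      Module.finrank F m = 2 → p₁ ≤ m → p' ≤ m → m = p₁ ⊔ p' := by
    intro m hne hr ha hb
    exact (Submodule.eq_of_le_of_finrank_le (sup_le ha hb)
      (by rw [sup_rank_two hp₁ hp' hne, hr])).symm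
  by_cases hll : ℓ₁ = ℓ'
  · -- left empty
    have hL : IsEmpty {p₂ : Submodule F (Fin 3 → F) //
        Module.finrank F p₂ = 1 ∧ p₂ ≤ ℓ₁ ∧ p₂ ≤ ℓ' ∧
          p₂ ≠ p₁ ∧ p₂ ≠ p' ∧ ℓ₁ ≠ ℓ'} :=
      ⟨fun x => x.2.2.2.2.2.2 hll⟩
    have hR : IsEmpty {m : Submodule F (Fin 3 → F) //
        Module.finrank F m = 2 ∧ p₁ ≤ m ∧ p' ≤ m ∧
          m ≠ ℓ₁ ∧ m ≠ ℓ' ∧ p₁ ≠ p'} := by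
      constructor
      rintro ⟨m, hr, ha, hb, hc, hd, hne⟩
      have hm := Rchar m hne hr ha hb
      have : m = ℓ₁ := by
        subst hm
        exact Submodule.eq_of_le_of_finrank_le (sup_le h₁ (hll ▸ h'))
          (by rw [sup_rank_two hp₁ hp' hne, hℓ₁])
      exact hc this
    rw [Nat.card_of_isEmpty, Nat.card_of_isEmpty]
  · by_cases hpp : p₁ = p'
    · have hR : IsEmpty {m : Submodule F (Fin 3 → F) //
          Module.finrank F m = 2 ∧ p₁ ≤ m ∧ p' ≤ m ∧
            m ≠ ℓ₁ ∧ m ≠ ℓ' ∧ p₁ ≠ p'} :=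
        ⟨fun x => x.2.2.2.2.2.2 hpp⟩
      have hL : IsEmpty {p₂ : Submodule F (Fin 3 → F) //
          Module.finrank F p₂ = 1 ∧ p₂ ≤ ℓ₁ ∧ p₂ ≤ ℓ' ∧
            p₂ ≠ p₁ ∧ p₂ ≠ p' ∧ ℓ₁ ≠ ℓ'} := by
        constructor
        rintro ⟨p₂, hr, ha, hb, hc, hd, hne⟩
        have hm := Lchar p₂ hne hr ha hb
        have : p₁ = ℓ₁ ⊓ ℓ' :=
          Submodule.eq_of_le_of_finrank_le (le_inf h₁ (hpp ▸ h'))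
            (by rw [inf_rank_one hℓ₁ hℓ' hne, hp₁])
        exact hc (hm.trans this.symm)
      rw [Nat.card_of_isEmpty, Nat.card_of_isEmpty]
    · by_cases ha1 : p₁ ≤ ℓ'
      · -- both empty
        have hL : IsEmpty {p₂ : Submodule F (Fin 3 → F) //
            Module.finrank F p₂ = 1 ∧ p₂ ≤ ℓ₁ ∧ p₂ ≤ ℓ' ∧
              p₂ ≠ p₁ ∧ p₂ ≠ p' ∧ ℓ₁ ≠ ℓ'} := by
          constructor
          rintro ⟨p₂, hr, ha, hb, hc, hd, hne⟩
          have hm := Lchar p₂ hne hr ha hb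
          have : p₁ = ℓ₁ ⊓ ℓ' :=
            Submodule.eq_of_le_of_finrank_le (le_inf h₁ ha1)
              (by rw [inf_rank_one hℓ₁ hℓ' hne, hp₁])
          exact hc (hm.trans this.symm)
        have hR : IsEmpty {m : Submodule F (Fin 3 → F) //
            Module.finrank F m = 2 ∧ p₁ ≤ m ∧ p' ≤ m ∧
              m ≠ ℓ₁ ∧ m ≠ ℓ' ∧ p₁ ≠ p'} := by
          constructor
          rintro ⟨m, hr, ha, hb, hc, hd, hne⟩
          have hm := Rchar m hne hr ha hb
          have : m = ℓ' := by
            subst hm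
            exact Submodule.eq_of_le_of_finrank_le (sup_le ha1 h')
              (by rw [sup_rank_two hp₁ hp' hne, hℓ'])
          exact hd this
        rw [Nat.card_of_isEmpty, Nat.card_of_isEmpty]
      · by_cases hb1 : p' ≤ ℓ₁
        · have hL : IsEmpty {p₂ : Submodule F (Fin 3 → F) //
              Module.finrank F p₂ = 1 ∧ p₂ ≤ ℓ₁ ∧ p₂ ≤ ℓ' ∧
                p₂ ≠ p₁ ∧ p₂ ≠ p' ∧ ℓ₁ ≠ ℓ'} := by
            constructor
            rintro ⟨p₂, hr, ha, hb, hc, hd, hne⟩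
            have hm := Lchar p₂ hne hr ha hb
            have : p' = ℓ₁ ⊓ ℓ' :=
              Submodule.eq_of_le_of_finrank_le (le_inf hb1 h')
                (by rw [inf_rank_one hℓ₁ hℓ' hne, hp'])
            exact hd (hm.trans this.symm)
          have hR : IsEmpty {m : Submodule F (Fin 3 → F) //
              Module.finrank F m = 2 ∧ p₁ ≤ m ∧ p' ≤ m ∧
                m ≠ ℓ₁ ∧ m ≠ ℓ' ∧ p₁ ≠ p'} := by
            constructor
            rintro ⟨m, hr, ha, hb, hc, hd, hne⟩
            have hm := Rchar m hne hr ha hb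
            have : m = ℓ₁ := by
              subst hm
              exact Submodule.eq_of_le_of_finrank_le (sup_le h₁ hb1)
                (by rw [sup_rank_two hp₁ hp' hne, hℓ₁])
            exact hc this
          rw [Nat.card_of_isEmpty, Nat.card_of_isEmpty]
        · -- both have exactly one element
          have hLmem : Module.finrank F ↥(ℓ₁ ⊓ ℓ') = 1 ∧ ℓ₁ ⊓ ℓ' ≤ ℓ₁ ∧ ℓ₁ ⊓ ℓ' ≤ ℓ' ∧
              ℓ₁ ⊓ ℓ' ≠ p₁ ∧ ℓ₁ ⊓ ℓ' ≠ p' ∧ ℓ₁ ≠ ℓ' := by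
            refine ⟨inf_rank_one hℓ₁ hℓ' hll, inf_le_left, inf_le_right, ?_, ?_, hll⟩
            · intro h; exact ha1 (h ▸ inf_le_right)
            · intro h; exact hb1 (h ▸ inf_le_left)
          have hRmem : Module.finrank F ↥(p₁ ⊔ p') = 2 ∧ p₁ ≤ p₁ ⊔ p' ∧ p' ≤ p₁ ⊔ p' ∧
              p₁ ⊔ p' ≠ ℓ₁ ∧ p₁ ⊔ p' ≠ ℓ' ∧ p₁ ≠ p' := by
            refine ⟨sup_rank_two hp₁ hp' hpp, le_sup_left, le_sup_right, ?_, ?_, hpp⟩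
            · intro h; exact hb1 (h ▸ le_sup_right)
            · intro h; exact ha1 (h ▸ le_sup_left)
          have hL1 : Nat.card {p₂ : Submodule F (Fin 3 → F) //
              Module.finrank F p₂ = 1 ∧ p₂ ≤ ℓ₁ ∧ p₂ ≤ ℓ' ∧
                p₂ ≠ p₁ ∧ p₂ ≠ p' ∧ ℓ₁ ≠ ℓ'} = 1 := by
            rw [Nat.card_eq_one_iff_unique]
            exact ⟨⟨fun x y => Subtype.ext ((Lchar x.1 hll x.2.1 x.2.2.1 x.2.2.2.1).trans
              (Lchar y.1 hll y.2.1 y.2.2.1 y.2.2.2.1).symm)⟩, ⟨⟨_, hLmem⟩⟩⟩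
          have hR1 : Nat.card {m : Submodule F (Fin 3 → F) //
              Module.finrank F m = 2 ∧ p₁ ≤ m ∧ p' ≤ m ∧
                m ≠ ℓ₁ ∧ m ≠ ℓ' ∧ p₁ ≠ p'} = 1 := by
            rw [Nat.card_eq_one_iff_unique]
            exact ⟨⟨fun x y => Subtype.ext ((Rchar x.1 hpp x.2.1 x.2.2.1 x.2.2.2.1).trans
              (Rchar y.1 hpp y.2.1 y.2.2.1 y.2.2.2.1).symm)⟩, ⟨⟨_, hRmem⟩⟩⟩
          rw [hL1, hR1]
end

section
/- Let F be a finite field with q elements, let G = SL(3,F), and let X be the G-set of complete flags in F³. Then the dimension over ℂ of the endomorphism algebra End_{Rep ℂ G}(ℂ[X]) of the permutation representation ℂ[X] equals 6. (This endomorphism algebra is the A₂ Iwahori–Hecke algebra 𝓗(A₂,q), whose dimension is the order of the Coxeter group S₃.) -/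
/-- A complete flag in `F³`: a pair of subspaces `V₁ ≤ V₂` with `dim V₁ = 1` and
`dim V₂ = 2`. -/
def CompleteFlag (F : Type) [Field F] : Type :=
  {V : Submodule F (Fin 3 → F) × Submodule F (Fin 3 → F) //
    Module.finrank F V.1 = 1 ∧ Module.finrank F V.2 = 2 ∧ V.1 ≤ V.2}

/-- `SL(3,F)` acts on complete flags in `F³` by taking images of subspaces. -/
noncomputable instance completeFlagAction (F : Type) [Field F] :
    MulAction (Matrix.SpecialLinearGroup (Fin 3) F) (CompleteFlag F) where
  smul g V := ⟨(V.1.1.map (Matrix.SpecialLinearGroup.toLin' g).toLinearMap,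
                V.1.2.map (Matrix.SpecialLinearGroup.toLin' g).toLinearMap),
      by rw [LinearEquiv.finrank_map_eq]; exact V.2.1,
      by rw [LinearEquiv.finrank_map_eq]; exact V.2.2.1,
      Submodule.map_mono V.2.2.2⟩
  one_smul V := by
    apply Subtype.ext
    show (Submodule.map _ _, Submodule.map _ _) = _
    rw [map_one]
    simp [LinearEquiv.coe_toLinearMap_one, Submodule.map_id]
  mul_smul g h V := by
    apply Subtype.ext
    show (Submodule.map _ _, Submodule.map _ _) = (Submodule.map _ _, Submodule.map _ _)
    rw [map_mul]
    exact Prod.ext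
      (by simp only [LinearEquiv.coe_toLinearMap_mul, Module.End.mul_eq_comp, Submodule.map_comp]; rfl)
      (by simp only [LinearEquiv.coe_toLinearMap_mul, Module.End.mul_eq_comp, Submodule.map_comp]; rfl)

/-!
An intertwiner of a permutation representation `k[X]` is determined by its matrix, which is
indexed by `X × X` and is constant exactly on the orbits of the diagonal action; so the
dimension of the endomorphism algebra is the number of `G`-orbits on `X × X`.

For flags in `F³` these orbits are the Bruhat cells. Any two flags have the form
`⟨b₀⟩ ⊂ ⟨b₀, b₁⟩` and `⟨b_{σ 0}⟩ ⊂ ⟨b_{σ 0}, b_{σ 1}⟩` for a basis `b` and some `σ ∈ S₃`.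
`SL(3,F)` carries any basis to any other up to rescaling its vectors, and `σ` can be read off
from the incidences between the four subspaces, so the orbits are in bijection with `S₃`.
-/

open Module Submodule MonoidAlgebra

namespace Representation

variable {k G X : Type*} [CommRing k] [Group G] [MulAction G X]

section Matrix

variable [Fintype X] [DecidableEq X]

theorem toLin_comp_ofMulAction {M : Matrix X X k}
    (hM : ∀ (g : G) (x y : X), M (g • x) (g • y) = M x y) (g : G) :
    Matrix.toLin (basis X k) (basis X k) M ∘ₗ ofMulAction k G X g =
      ofMulAction k G X g ∘ₗ Matrix.toLin (basis X k) (basis X k) M := by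
  have hentry (x z : X) :
      (Matrix.toLin (basis X k) (basis X k) M (single z 1)).coeff x = M x z := by
    conv_rhs => rw [← LinearMap.toMatrix_toLin (basis X k) (basis X k) M,
      LinearMap.toMatrix_apply, basis_apply]
    rfl
  refine (basis X k).ext fun y ↦ MonoidAlgebra.ext <| Finsupp.ext fun x ↦ ?_
  simp only [LinearMap.comp_apply, basis_apply, ofMulAction_single, coeff_ofMulAction, hentry]
  rw [← hM g (g⁻¹ • x), smul_inv_smul]

theorem toMatrix_ofMulAction_intertwiningMap_smul
    (f : (ofMulAction k G X).IntertwiningMap (ofMulAction k G X)) (g : G) (x y : X) :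
    LinearMap.toMatrix (basis X k) (basis X k) f.toLinearMap (g • x) (g • y) =
      LinearMap.toMatrix (basis X k) (basis X k) f.toLinearMap x y := by
  simp only [LinearMap.toMatrix_apply, basis_apply, IntertwiningMap.toLinearMap_apply]
  rw [← ofMulAction_single, f.isIntertwining]
  exact (coeff_ofMulAction g _ _).trans (by rw [inv_smul_smul]; rfl)

noncomputable def intertwiningMapOfMulActionEquiv :
    (ofMulAction k G X).IntertwiningMap (ofMulAction k G X) ≃ₗ[k]
      (MulAction.orbitRel.Quotient G (X × X) → k) where
  toFun f :=
    Quotient.lift (fun p ↦ LinearMap.toMatrix (basis X k) (basis X k) f.toLinearMap p.1 p.2)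
      (by rintro _ p ⟨g, rfl⟩; exact toMatrix_ofMulAction_intertwiningMap_smul f g p.1 p.2)
  invFun c := ⟨Matrix.toLin (basis X k) (basis X k) (Matrix.of fun x y ↦ c ⟦(x, y)⟧),
    toLin_comp_ofMulAction fun g x y ↦ congrArg c (Quotient.sound ⟨g, rfl⟩)⟩
  map_add' f f' := funext <| Quotient.ind fun p ↦ by simp [IntertwiningMap.add_toLinearMap]
  map_smul' a f := funext <| Quotient.ind fun p ↦ by simp
  left_inv f := IntertwiningMap.ext (Matrix.toLin_toMatrix _ _ f.toLinearMap)
  right_inv c := funext <| Quotient.ind fun p ↦ by simp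

end Matrix

theorem finrank_intertwiningMap_ofMulAction [StrongRankCondition k] [Finite X] :
    finrank k ((ofMulAction k G X).IntertwiningMap (ofMulAction k G X)) =
      Nat.card (MulAction.orbitRel.Quotient G (X × X)) := by
  classical
  have := Fintype.ofFinite X
  have := Fintype.ofFinite (MulAction.orbitRel.Quotient G (X × X))
  rw [intertwiningMapOfMulActionEquiv.finrank_eq, finrank_fintype_fun_eq_card,
    Nat.card_eq_fintype_card]

end Representation

theorem Rep.finrank_hom_ofMulAction_self (k G X : Type*) [CommRing k] [StrongRankCondition k]
    [Group G] [MulAction G X] [Finite X] :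
    finrank k (Rep.ofMulAction k G X ⟶ Rep.ofMulAction k G X) =
      Nat.card (MulAction.orbitRel.Quotient G (X × X)) :=
  (Rep.homLinearEquiv _ _).finrank_eq.trans Representation.finrank_intertwiningMap_ofMulAction

open Matrix in
theorem Matrix.SpecialLinearGroup.exists_toLin'_smul_eq {n K : Type*} [Fintype n]
    [DecidableEq n] [Nonempty n] [Field K] (b b' : Basis n K (n → K)) :
    ∃ (g : SpecialLinearGroup n K) (c : n → K), ∀ i, toLin' g (c i • b i) = b' i := by
  set B := (Pi.basisFun K n).toMatrix b
  set B' := (Pi.basisFun K n).toMatrix b'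
  have hcol (b : Basis n K (n → K)) (i : n) : ((Pi.basisFun K n).toMatrix b).col i = b i := by
    ext; simp [Basis.toMatrix_apply]
  have := (Pi.basisFun K n).invertibleToMatrix b
  have := (Pi.basisFun K n).invertibleToMatrix b'
  have hB : B.det ≠ 0 := B.isUnit_det_of_invertible.ne_zero
  have hB' : B'.det ≠ 0 := B'.isUnit_det_of_invertible.ne_zero
  -- `d` rescales one column of `B'` so that `B' * diagonal d * B⁻¹` has determinant `1`
  set d : n → K := Pi.mulSingle (Classical.arbitrary n) (B.det / B'.det)
  have hd (i : n) : d i ≠ 0 := by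
    by_cases hi : i = Classical.arbitrary n
    · subst hi; simp [d, hB, hB']
    · simp [d, hi]
  have hdet : (B' * diagonal d * B⁻¹).det = 1 := by
    rw [det_mul, det_mul, det_nonsing_inv, det_diagonal, Finset.prod_pi_mulSingle',
      if_pos (Finset.mem_univ _), Ring.inverse_eq_inv']
    field_simp
  refine ⟨(⟨_, hdet⟩ : SpecialLinearGroup n K), fun i ↦ (d i)⁻¹, fun i ↦ ?_⟩
  have hBi : B⁻¹ *ᵥ b i = Pi.single i 1 := by
    rw [← hcol b i, ← mulVec_single_one, mulVec_mulVec, nonsing_inv_mul _ hB.isUnit, one_mulVec]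
  change (B' * diagonal d * B⁻¹) *ᵥ ((d i)⁻¹ • b i) = b' i
  rw [mulVec_smul, ← mulVec_mulVec, ← mulVec_mulVec, hBi,
    diagonal_mulVec_single, mul_one, mulVec_single, hcol]
  rw [op_smul_eq_smul, inv_smul_smul₀ (hd i)]

theorem LinearIndependent.finrank_span_pair {K V : Type*} [DivisionRing K] [AddCommGroup V]
    [Module K V] {x y : V} (h : LinearIndependent K ![x, y]) : finrank K (span K {x, y}) = 2 := by
  have := finrank_span_eq_card h
  rwa [Matrix.range_cons, Matrix.range_cons, Matrix.range_empty, Set.union_empty,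
    Set.union_singleton, Set.pair_comm, Fintype.card_fin] at this

theorem Module.Basis.linearIndependent_pair {R M ι : Type*} [Semiring R] [AddCommMonoid M]
    [Module R M] (b : Basis ι R M) {i j : ι} (hij : i ≠ j) : LinearIndependent R ![b i, b j] := by
  have hinj : Function.Injective ![i, j] := by
    intro a c; fin_cases a <;> fin_cases c <;> simp [hij, hij.symm]
  convert b.linearIndependent.comp _ hinj using 1
  ext k; fin_cases k <;> rfl

theorem Module.Basis.span_image_le_span_image_iff {R M ι : Type*} [Semiring R] [Nontrivial R]
    [AddCommMonoid M] [Module R M] (b : Basis ι R M) {s t : Set ι} :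
    span R (b '' s) ≤ span R (b '' t) ↔ s ⊆ t :=
  ⟨fun h i hi ↦ b.self_mem_span_image.1 (h (subset_span ⟨i, hi, rfl⟩)),
    fun h ↦ span_mono (Set.image_mono h)⟩

theorem Submodule.exists_mem_notMem_of_finrank_eq {K V : Type*} [DivisionRing K]
    [AddCommGroup V] [Module K V] {A B : Submodule K V} [FiniteDimensional K B]
    (h : finrank K A = finrank K B) (hne : A ≠ B) : ∃ x ∈ A, x ∉ B :=
  SetLike.not_le_iff_exists.1 fun hle ↦ hne (eq_of_le_of_finrank_eq hle h)

open Equiv (Perm)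
open Matrix (SpecialLinearGroup)

namespace CompleteFlag

variable {F : Type} [Field F]

instance [Finite F] : Finite (CompleteFlag F) :=
  Subtype.finite

theorem coe_smul (g : SpecialLinearGroup (Fin 3) F) (V : CompleteFlag F) :
    (g • V).1 = (V.1.1.map (SpecialLinearGroup.toLin' g).toLinearMap,
      V.1.2.map (SpecialLinearGroup.toLin' g).toLinearMap) :=
  rfl

noncomputable def ofBasis (b : Basis (Fin 3) F (Fin 3 → F)) : CompleteFlag F :=
  ⟨(span F {b 0}, span F {b 0, b 1}), finrank_span_singleton (b.ne_zero 0),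
    (b.linearIndependent_pair (by decide)).finrank_span_pair, span_mono (by simp)⟩

/-- The pair of flags in relative position `σ` with respect to the frame given by `b`. -/
noncomputable def pairOfBasis (b : Basis (Fin 3) F (Fin 3 → F)) (σ : Perm (Fin 3)) :
    CompleteFlag F × CompleteFlag F :=
  (ofBasis b, ofBasis (b.reindex σ.symm))

theorem fst_eq_span_singleton {V : CompleteFlag F} {x : Fin 3 → F} (hx : x ∈ V.1.1)
    (hx₀ : x ≠ 0) : V.1.1 = span F {x} :=
  (eq_of_le_of_finrank_eq ((span_singleton_le_iff_mem _ _).2 hx)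
    ((finrank_span_singleton hx₀).trans V.2.1.symm)).symm

theorem eq_ofBasis {V : CompleteFlag F} {b : Basis (Fin 3) F (Fin 3 → F)} (h₀ : b 0 ∈ V.1.1)
    (h₁ : b 1 ∈ V.1.2) : V = ofBasis b := by
  refine Subtype.ext (Prod.ext (fst_eq_span_singleton h₀ (b.ne_zero 0)) ?_)
  refine (eq_of_le_of_finrank_eq ?_ ?_).symm
  · exact span_le.2 (Set.insert_subset (V.2.2.2 h₀) (Set.singleton_subset_iff.2 h₁))
  · rw [V.2.2.1]; exact (ofBasis b).2.2.1

theorem smul_ofBasis {g : SpecialLinearGroup (Fin 3) F} {b b' : Basis (Fin 3) F (Fin 3 → F)}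
    {c : Fin 3 → F} (h : ∀ i, SpecialLinearGroup.toLin' g (c i • b i) = b' i) :
    g • ofBasis b = ofBasis b' :=
  eq_ofBasis (h 0 ▸ mem_map_of_mem (smul_mem _ _ (mem_span_singleton_self _)))
    (h 1 ▸ mem_map_of_mem (smul_mem _ _ (subset_span (by simp))))

theorem exists_smul_pairOfBasis_eq (b b' : Basis (Fin 3) F (Fin 3 → F)) (σ : Perm (Fin 3)) :
    ∃ g : SpecialLinearGroup (Fin 3) F, g • pairOfBasis b σ = pairOfBasis b' σ := by
  obtain ⟨g, c, h⟩ := SpecialLinearGroup.exists_toLin'_smul_eq b b'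
  exact ⟨g, Prod.ext (smul_ofBasis h) (smul_ofBasis (c := c ∘ σ) fun i ↦ by simpa using h (σ i))⟩

theorem exists_mem_fst_ne_zero (V : CompleteFlag F) : ∃ x ∈ V.1.1, x ≠ 0 :=
  exists_mem_ne_zero_of_ne_bot fun h ↦ by
    have := V.2.1
    rw [h, finrank_bot] at this
    exact zero_ne_one this

theorem exists_mem_snd_notMem_fst (V : CompleteFlag F) : ∃ y ∈ V.1.2, y ∉ V.1.1 :=
  SetLike.exists_of_lt (V.2.2.2.lt_of_ne fun h ↦ by
    have := V.2.1
    rw [h, V.2.2.1] at this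
    exact absurd this (by decide))

theorem exists_notMem_snd (V : CompleteFlag F) : ∃ z, z ∉ V.1.2 := by
  obtain ⟨z, -, hz⟩ := SetLike.exists_of_lt (lt_top_iff_ne_top.2 fun (h : V.1.2 = ⊤) ↦ by
    have := V.2.2.1
    rw [h, finrank_top, finrank_fin_fun] at this
    exact absurd this (by decide))
  exact ⟨z, hz⟩

theorem snd_inf_snd_ne_bot (V W : CompleteFlag F) : V.1.2 ⊓ W.1.2 ≠ ⊥ := fun h ↦ by
  have hsum := finrank_sup_add_finrank_inf_eq V.1.2 W.1.2
  have hle := (V.1.2 ⊔ W.1.2).finrank_le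
  rw [h, finrank_bot, V.2.2.1, W.2.2.1] at hsum
  rw [finrank_fin_fun] at hle
  omega

theorem exists_eq_pairOfBasis_of_mem {V W : CompleteFlag F} {x y z : Fin 3 → F}
    (hx : x ∈ V.1.1) (hx₀ : x ≠ 0) (hy : y ∈ V.1.2) (hy₁ : y ∉ V.1.1) (hz : z ∉ V.1.2)
    (σ : Perm (Fin 3)) (hσ₀ : ![x, y, z] (σ 0) ∈ W.1.1) (hσ₁ : ![x, y, z] (σ 1) ∈ W.1.2) :
    ∃ (b : Basis (Fin 3) F (Fin 3 → F)) (σ : Perm (Fin 3)), (V, W) = pairOfBasis b σ := by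
  have hxy : LinearIndependent F ![x, y] :=
    (LinearIndependent.pair_iff' hx₀).2 fun a h ↦ hy₁ (h ▸ V.1.1.smul_mem a hx)
  have hxyz : LinearIndependent F ![x, y, z] := by
    have hinit : Fin.init ![x, y, z] = ![x, y] := by ext i; fin_cases i <;> rfl
    refine linearIndependent_finSucc'.2 ⟨hinit ▸ hxy, fun h ↦ hz (span_le.2 ?_ h)⟩
    rintro _ ⟨i, rfl⟩
    fin_cases i
    exacts [V.2.2.2 hx, hy]
  let b := basisOfLinearIndependentOfCardEqFinrank hxyz (by simp)
  have hb : ⇑b = ![x, y, z] := coe_basisOfLinearIndependentOfCardEqFinrank hxyz _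
  refine ⟨b, σ, Prod.ext (eq_ofBasis ?_ ?_) (eq_ofBasis ?_ ?_)⟩ <;> simpa [hb]

/-- The Bruhat decomposition: the six cases are the six relative positions of two flags. -/
theorem exists_eq_pairOfBasis (p : CompleteFlag F × CompleteFlag F) :
    ∃ (b : Basis (Fin 3) F (Fin 3 → F)) (σ : Perm (Fin 3)), p = pairOfBasis b σ := by
  obtain ⟨V, W⟩ := p
  obtain ⟨x, hx, hx₀⟩ := V.exists_mem_fst_ne_zero
  obtain ⟨y, hy, hy₁⟩ := V.exists_mem_snd_notMem_fst
  obtain ⟨z, hz⟩ := V.exists_notMem_snd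
  have hW₁ := exists_mem_notMem_of_finrank_eq (W.2.1.trans V.2.1.symm)
  have hW₂ := exists_mem_notMem_of_finrank_eq (W.2.2.1.trans V.2.2.1.symm)
  by_cases hWV : W.1.1 ≤ V.1.2
  · by_cases h₁ : W.1.1 = V.1.1 <;> by_cases h₂ : W.1.2 = V.1.2
    · exact exists_eq_pairOfBasis_of_mem hx hx₀ hy hy₁ hz 1 (h₁ ▸ hx) (h₂ ▸ hy)
    · obtain ⟨z, hzW, hz⟩ := hW₂ h₂
      exact exists_eq_pairOfBasis_of_mem hx hx₀ hy hy₁ hz (.swap 1 2) (h₁ ▸ hx) hzW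
    · obtain ⟨y, hyW, hy₁⟩ := hW₁ h₁
      exact exists_eq_pairOfBasis_of_mem hx hx₀ (hWV hyW) hy₁ hz (.swap 0 1) hyW
        (h₂ ▸ V.2.2.2 hx)
    · obtain ⟨y, hyW, hy₁⟩ := hW₁ h₁
      obtain ⟨z, hzW, hz⟩ := hW₂ h₂
      exact exists_eq_pairOfBasis_of_mem hx hx₀ (hWV hyW) hy₁ hz (finRotate 3) hyW hzW
  · obtain ⟨z, hzW, hz⟩ := SetLike.not_le_iff_exists.1 hWV
    by_cases hVW : V.1.1 ≤ W.1.2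
    · exact exists_eq_pairOfBasis_of_mem hx hx₀ hy hy₁ hz (finRotate 3).symm hzW (hVW hx)
    · obtain ⟨y, ⟨hy, hyW⟩, hy₀⟩ := exists_mem_ne_zero_of_ne_bot (snd_inf_snd_ne_bot V W)
      have hy₁ : y ∉ V.1.1 := fun hyV ↦ hVW <| by
        rwa [fst_eq_span_singleton hyV hy₀, span_singleton_le_iff_mem]
      exact exists_eq_pairOfBasis_of_mem hx hx₀ hy hy₁ hz (.swap 0 2) hzW hyW

def incidence (p : CompleteFlag F × CompleteFlag F) : Prop × Prop × Prop × Prop :=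
  (p.1.1.1 ≤ p.2.1.1, p.1.1.1 ≤ p.2.1.2, p.1.1.2 ≤ p.2.1.2, p.2.1.1 ≤ p.1.1.2)

theorem incidence_smul (g : SpecialLinearGroup (Fin 3) F)
    (p : CompleteFlag F × CompleteFlag F) : incidence (g • p) = incidence p := by
  simp only [incidence, Prod.smul_fst, Prod.smul_snd, coe_smul,
    map_le_map_iff_of_injective (SpecialLinearGroup.toLin' g).injective]

theorem incidence_pairOfBasis (b : Basis (Fin 3) F (Fin 3 → F)) (σ : Perm (Fin 3)) :
    incidence (pairOfBasis b σ) =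
      (0 = σ 0, 0 = σ 0 ∨ 0 = σ 1, (0 = σ 0 ∨ 0 = σ 1) ∧ (1 = σ 0 ∨ 1 = σ 1),
        σ 0 = 0 ∨ σ 0 = 1) := by
  simp only [incidence, pairOfBasis, ofBasis, Basis.reindex_apply, Equiv.symm_symm]
  simp only [← Set.image_pair b]
  simp only [← Set.image_singleton (f := b), b.span_image_le_span_image_iff]
  simp [Set.insert_subset_iff]

theorem eq_of_smul_pairOfBasis_eq {g : SpecialLinearGroup (Fin 3) F}
    {b b' : Basis (Fin 3) F (Fin 3 → F)} {σ τ : Perm (Fin 3)}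
    (h : g • pairOfBasis b σ = pairOfBasis b' τ) : σ = τ := by
  have hinc := congrArg incidence h
  rw [incidence_smul, incidence_pairOfBasis, incidence_pairOfBasis] at hinc
  simp only [Prod.mk.injEq, eq_iff_iff] at hinc
  clear h
  revert σ τ
  decide

theorem card_orbitRel_quotient_prod :
    Nat.card (MulAction.orbitRel.Quotient (SpecialLinearGroup (Fin 3) F)
      (CompleteFlag F × CompleteFlag F)) = 6 := by
  let f (σ : Perm (Fin 3)) : MulAction.orbitRel.Quotient (SpecialLinearGroup (Fin 3) F)
      (CompleteFlag F × CompleteFlag F) := ⟦pairOfBasis (Pi.basisFun F (Fin 3)) σ⟧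
  have hf : Function.Bijective f := by
    refine ⟨fun σ τ h ↦ ?_, Quotient.ind fun p ↦ ?_⟩
    · obtain ⟨g, hg⟩ := Quotient.exact h
      exact (eq_of_smul_pairOfBasis_eq hg).symm
    · obtain ⟨b, σ, rfl⟩ := exists_eq_pairOfBasis p
      obtain ⟨g, hg⟩ := exists_smul_pairOfBasis_eq b (Pi.basisFun F (Fin 3)) σ
      exact ⟨σ, Quotient.sound ⟨g, hg⟩⟩
  rw [← Nat.card_eq_of_bijective f hf, Nat.card_perm, Nat.card_fin]
  rfl

end CompleteFlag

/-- The endomorphism algebra of the permutation representation of `SL(3,F)` on the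
complete flags in `F³` (i.e. the `A₂` Iwahori–Hecke algebra) has dimension `6 = |S₃|`
over `ℂ`. -/
theorem finrank_end_flag_rep_eq_six (F : Type) [Field F] [Fintype F] :
    Module.finrank ℂ
      (Rep.ofMulAction ℂ (Matrix.SpecialLinearGroup (Fin 3) F) (CompleteFlag F) ⟶
        Rep.ofMulAction ℂ (Matrix.SpecialLinearGroup (Fin 3) F) (CompleteFlag F)) = 6 := by
  rw [Rep.finrank_hom_ofMulAction_self, CompleteFlag.card_orbitRel_quotient_prod]
end

section
/- A groupoid can be recovered up to equivalence from its presheaf category: if 𝒢 and ℋ are (small) groupoids such that the presheaf categories 𝒢ᵒᵖ ⥤ Type and ℋᵒᵖ ⥤ Type are equivalent, then the groupoids 𝒢 and ℋ are equivalent. -/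
/-!
Over a groupoid the representable presheaves are exactly the tiny ones, i.e. the `Q` for which
`Hom(Q, -)` preserves colimits. Indeed, if `Hom(Q, -)` preserves the canonical presentation of `Q`
as a colimit of representables, then `𝟙 Q` factors through one of them, so `Q` is a retract of
some `yoneda.obj g`; the idempotent `r ≫ i` of `yoneda.obj g` comes from an endomorphism of `g`,
which is invertible, so the retraction is an isomorphism. Tininess is invariant under equivalences,
hence `e` restricts to an equivalence between the representables, which are `G` and `H`.
-/

open CategoryTheory Limits Opposite

universe u v w w'

namespace CategoryTheory

lemma Retract.isIso_i_of_isIso_r_comp_i {C : Type*} [Category C] {X Y : C} (ρ : Retract X Y)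
    [IsIso (ρ.r ≫ ρ.i)] : IsIso ρ.i := by
  have : IsSplitEpi ρ.i := IsSplitEpi.mk' ⟨inv (ρ.r ≫ ρ.i) ≫ ρ.r, by simp⟩
  exact isIso_of_mono_of_isSplitEpi ρ.i

section Equivalence

variable {D D' : Type*} [Category.{v} D] [Category.{v} D'] (e : D ≌ D') (X : D)

lemma Equivalence.preservesColimitsOfSize_coyoneda_obj_functor_obj
    [PreservesColimitsOfSize.{w, w'} (coyoneda.obj (Opposite.op X))] :
    PreservesColimitsOfSize.{w, w'} (coyoneda.obj (Opposite.op (e.functor.obj X))) :=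
  let iso : coyoneda.obj (Opposite.op (e.functor.obj X)) ≅
      e.inverse ⋙ coyoneda.obj (Opposite.op X) :=
    e.toAdjunction.compCoyonedaIso.app (Opposite.op X)
  preservesColimits_of_natIso iso.symm

lemma Equivalence.preservesColimitsOfSize_coyoneda_obj_functor_obj_iff :
    PreservesColimitsOfSize.{w, w'} (coyoneda.obj (Opposite.op (e.functor.obj X))) ↔
      PreservesColimitsOfSize.{w, w'} (coyoneda.obj (Opposite.op X)) := by
  refine ⟨fun _ ↦ ?_, fun _ ↦ e.preservesColimitsOfSize_coyoneda_obj_functor_obj X⟩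
  have : PreservesColimitsOfSize.{w, w'}
      (coyoneda.obj (Opposite.op (e.inverse.obj (e.functor.obj X)))) :=
    e.symm.preservesColimitsOfSize_coyoneda_obj_functor_obj (e.functor.obj X)
  exact preservesColimits_of_natIso
    (F := coyoneda.obj (Opposite.op (e.inverse.obj (e.functor.obj X))))
    (coyoneda.mapIso (e.unitIso.app X).op)

end Equivalence

namespace Presheaf

lemma exists_retract_yoneda_of_preservesColimit {C : Type u} [SmallCategory C]
    (Q : Cᵒᵖ ⥤ Type u) [PreservesColimit (functorToRepresentables Q) (coyoneda.obj (op Q))] :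
    ∃ c : C, Nonempty (Retract Q (yoneda.obj c)) := by
  obtain ⟨j, s, hs⟩ := Types.jointly_surjective _
    (isColimitOfPreserves (coyoneda.obj (op Q)) (colimitOfRepresentable Q)) (𝟙 Q)
  exact ⟨_, ⟨(Retract.mk s _ hs).trans (Retract.ofIso (uliftYonedaIsoYoneda.app _))⟩⟩

variable {G : Type u} [Groupoid.{u} G]

lemma mem_essImage_yoneda_of_retract {Q : Gᵒᵖ ⥤ Type u} {g : G}
    (ρ : Retract Q (yoneda.obj g)) : yoneda.essImage Q := by
  have : IsIso (ρ.r ≫ ρ.i) := by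
    rw [← Yoneda.fullyFaithful.map_preimage (ρ.r ≫ ρ.i)]
    infer_instance
  have := ρ.isIso_i_of_isIso_r_comp_i
  exact ⟨g, ⟨(asIso ρ.i).symm⟩⟩

theorem mem_essImage_yoneda_iff_preservesColimitsOfSize (Q : Gᵒᵖ ⥤ Type u) :
    yoneda.essImage Q ↔ PreservesColimitsOfSize.{u, u} (coyoneda.obj (op Q)) := by
  constructor
  · rintro ⟨g, ⟨α⟩⟩
    have : PreservesColimitsOfSize.{u, u} (coyoneda.obj (op (yoneda.obj g))) :=
      ⟨⟨inferInstance⟩⟩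
    exact preservesColimits_of_natIso (coyoneda.mapIso α.symm.op)
  · intro
    obtain ⟨g, ⟨ρ⟩⟩ := exists_retract_yoneda_of_preservesColimit Q
    exact mem_essImage_yoneda_of_retract ρ

end Presheaf

end CategoryTheory

/-- A groupoid can be recovered up to equivalence from its presheaf category: if two
(small) groupoids have equivalent categories of `Type`-valued presheaves, then the
groupoids themselves are equivalent. -/
theorem groupoid_equiv_of_presheaf_equiv {G H : Type u} [Groupoid.{u} G] [Groupoid.{u} H]
    (e : (Gᵒᵖ ⥤ Type u) ≌ (Hᵒᵖ ⥤ Type u)) : Nonempty (G ≌ H) := by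
  have hrep : yoneda.essImage.inverseImage e.functor = yoneda.essImage := by
    ext Q
    simp only [ObjectProperty.prop_inverseImage_iff,
      Presheaf.mem_essImage_yoneda_iff_preservesColimitsOfSize,
      e.preservesColimitsOfSize_coyoneda_obj_functor_obj_iff]
  exact ⟨yoneda.toEssImage.asEquivalence.trans
    ((e.congrFullSubcategory hrep).trans yoneda.toEssImage.asEquivalence.symm)⟩
end
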